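/- There exist universal constants C > 0 and β > 0 with the following property. Let θ ∈ [0, 1), let n ≥ 1 be an integer with θ·n² ≤ 1, let v₀ ∈ ℤ², and let H : ℤ² → ℝ satisfy: H(v) ≥ 0 for every v with |v − v₀| ≤ 2n (Euclidean distance), and the massive discrete harmonicity H(v) = ((1 − θ)/4)·Σ_{u ∼ v} H(u) (sum over the four ℓ¹-neighbors u of v) for every v with |v − v₀| ≤ 2n − 1. Then for all v₁, v₂ ∈ ℤ² with |v₁ − v₀| ≤ n and |v₂ − v₀| ≤ n one has |H(v₂) − H(v₁)| ≤ C·(|v₂ − v₁|/n)^β · max{ H(v) : v ∈ ℤ², |v − v₀| ≤ 2n }. -/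

import Mathlib

/-- Vertices of the square lattice ℤ². -/
abbrev V : Type := ℤ × ℤ

/-- Euclidean distance between two lattice vertices. -/
noncomputable def eucDist (u v : V) : ℝ :=
  Real.sqrt (((u.1 - v.1 : ℤ) : ℝ) ^ 2 + ((u.2 - v.2 : ℤ) : ℝ) ^ 2)

/-- `H` is massive discrete harmonic with killing parameter `θ` at `v`:
`H(v) = ((1-θ)/4)·Σ_{u ∼ v} H(u)`, the sum over the four ℓ¹-neighbors of `v`. -/
def MassiveHarmonicAt (θ : ℝ) (H : V → ℝ) (v : V) : Prop :=
  H v = ((1 - θ) / 4) *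
    (H (v + (1, 0)) + H (v + (-1, 0)) + H (v + (0, 1)) + H (v + (0, -1)))

/-!
In the rotated coordinates `x₁ + x₂`, `x₁ - x₂` a lattice step moves both coordinates by `±1`
independently, so the steps from two points `x`, `y` of the same sublattice can be coupled by
mirroring one rotated coordinate and moving the other synchronously; a harmonic `H` then satisfies
`|H x - H y| ≤ average of |H x' - H y'|` over the coupled moves. On the ℓ¹-ball of radius `R` the
barrier `Z(x, y)`, a sum of squares corrected by `4R|t| - t²` in the coordinate differences `t`,
decreases on average under the coupling and is at least `R²` on the boundary, so
`|H x - H y| - (M / R²) Z(x, y)` has no positive maximum. At `x = w` this gives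
`|H w - H y| ≤ 16 M ‖y - w‖₁ / R`, a Lipschitz bound (`β = 1`). Points of opposite parity are
reached by one harmonic step, where the killing costs `θ M ≤ M / n²`.
-/

def l1Norm (x : V) : ℤ := |x.1| + |x.2|

lemma l1Norm_add_le (x y : V) : l1Norm (x + y) ≤ l1Norm x + l1Norm y := by
  simp only [l1Norm, Prod.fst_add, Prod.snd_add]
  linarith [abs_add_le x.1 y.1, abs_add_le x.2 y.2]

lemma l1Norm_sub_le (x y : V) : l1Norm (x - y) ≤ l1Norm x + l1Norm y := by
  simp only [l1Norm, Prod.fst_sub, Prod.snd_sub]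
  linarith [abs_sub x.1 y.1, abs_sub x.2 y.2]

lemma one_le_l1Norm {x : V} (hx : x ≠ 0) : 1 ≤ l1Norm x := by
  by_contra! h
  refine hx (Prod.ext (abs_eq_zero.mp ?_) (abs_eq_zero.mp ?_)) <;>
    · simp only [l1Norm] at h
      linarith [abs_nonneg x.1, abs_nonneg x.2]

lemma finite_setOf_l1Norm_sub_le (w : V) (R : ℤ) : {x : V | l1Norm (x - w) ≤ R}.Finite := by
  refine (Set.finite_Icc (w - (R, R)) (w + (R, R))).subset fun x hx => ?_
  simp only [Set.mem_ofPred_eq, l1Norm, abs_eq_max_neg, Prod.fst_sub, Prod.snd_sub] at hx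
  simp only [Set.mem_Icc, Prod.le_def, Prod.fst_sub, Prod.snd_sub, Prod.fst_add, Prod.snd_add]
  omega

noncomputable def toPlane (u : V) : EuclideanSpace ℝ (Fin 2) :=
  WithLp.toLp 2 ![(u.1 : ℝ), (u.2 : ℝ)]

lemma eucDist_eq_dist (u v : V) : eucDist u v = dist (toPlane u) (toPlane v) := by
  rw [EuclideanSpace.dist_eq, eucDist, Fin.sum_univ_two]
  simp [toPlane, Real.dist_eq, sq_abs]

lemma eucDist_comm (u v : V) : eucDist u v = eucDist v u := by
  simp only [eucDist_eq_dist, dist_comm]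

lemma eucDist_triangle (u v w : V) : eucDist u w ≤ eucDist u v + eucDist v w := by
  simp only [eucDist_eq_dist, dist_triangle]

lemma eucDist_le_l1Norm (u v : V) : eucDist u v ≤ l1Norm (u - v) := by
  rw [eucDist, Real.sqrt_le_left (by unfold l1Norm; positivity)]
  simp only [l1Norm, Prod.fst_sub, Prod.snd_sub]
  push_cast
  nlinarith [sq_abs ((u.1 : ℝ) - v.1), sq_abs ((u.2 : ℝ) - v.2),
    abs_nonneg ((u.1 : ℝ) - v.1), abs_nonneg ((u.2 : ℝ) - v.2)]

lemma l1Norm_le_two_mul_eucDist (u v : V) : (l1Norm (u - v) : ℝ) ≤ 2 * eucDist u v := by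
  have hS : (0 : ℝ) ≤ ((u.1 - v.1 : ℤ) : ℝ) ^ 2 + ((u.2 - v.2 : ℤ) : ℝ) ^ 2 := by positivity
  have hL : (0 : ℝ) ≤ l1Norm (u - v) := by unfold l1Norm; positivity
  rw [eucDist]
  simp only [l1Norm, Prod.fst_sub, Prod.snd_sub] at hL ⊢
  push_cast at hS hL ⊢
  nlinarith [Real.sq_sqrt hS, Real.sqrt_nonneg (((u.1 : ℝ) - v.1) ^ 2 + ((u.2 : ℝ) - v.2) ^ 2),
    sq_abs ((u.1 : ℝ) - v.1), sq_abs ((u.2 : ℝ) - v.2),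
    sq_nonneg (|(u.1 : ℝ) - v.1| - |(u.2 : ℝ) - v.2|)]

def unitVec : Fin 4 → V := ![(1, 0), (-1, 0), (0, 1), (0, -1)]

lemma l1Norm_unitVec (i : Fin 4) : l1Norm (unitVec i) = 1 := by
  fin_cases i <;> rfl

lemma massiveHarmonicAt_iff_sum {θ : ℝ} {H : V → ℝ} {v : V} :
    MassiveHarmonicAt θ H v ↔ H v = (1 - θ) / 4 * ∑ i, H (v + unitVec i) := by
  rw [MassiveHarmonicAt, Fin.sum_univ_four]
  rfl

lemma massiveHarmonicAt_comp_add_left {θ : ℝ} {H : V → ℝ} {w x : V} :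
    MassiveHarmonicAt θ (fun v => H (w + v)) x ↔ MassiveHarmonicAt θ H (w + x) := by
  simp only [MassiveHarmonicAt, add_assoc]

section Coupling

variable {θ : ℝ} {H : V → ℝ}

lemma abs_sub_le_of_coupling {x y : V} (hθ0 : 0 ≤ θ) (hθ1 : θ ≤ 1)
    (hx : MassiveHarmonicAt θ H x) (hy : MassiveHarmonicAt θ H y) (σ : Equiv.Perm (Fin 4)) :
    |H x - H y| ≤ (∑ i, |H (x + unitVec i) - H (y + unitVec (σ i))|) / 4 := by
  rw [massiveHarmonicAt_iff_sum] at hx hy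
  have hdiff : H x - H y = (1 - θ) / 4 * ∑ i, (H (x + unitVec i) - H (y + unitVec (σ i))) := by
    rw [Finset.sum_sub_distrib, Equiv.sum_comp σ fun i => H (y + unitVec i), hx, hy, mul_sub]
  have hsum := Finset.abs_sum_le_sum_abs (fun i => H (x + unitVec i) - H (y + unitVec (σ i))) .univ
  have hnonneg : 0 ≤ ∑ i, |H (x + unitVec i) - H (y + unitVec (σ i))| := by positivity
  rw [hdiff, abs_mul, abs_of_nonneg (by linarith)]
  nlinarith

lemma abs_sub_le_of_forall_neighbor {K : ℝ} {w y : V} (hθ0 : 0 ≤ θ) (hθ1 : θ ≤ 1)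
    (hw : MassiveHarmonicAt θ H w) (hy : 0 ≤ H y)
    (hK : ∀ i, |H (w + unitVec i) - H y| ≤ K) :
    |H w - H y| ≤ K + θ * H y := by
  rw [massiveHarmonicAt_iff_sum] at hw
  have hdiff : H w - H y = (1 - θ) / 4 * ∑ i, (H (w + unitVec i) - H y) - θ * H y := by
    rw [Finset.sum_sub_distrib, hw]
    simp only [Finset.sum_const, Finset.card_univ, Fintype.card_fin, nsmul_eq_mul]
    ring
  have hsum : |∑ i, (H (w + unitVec i) - H y)| ≤ 4 * K :=
    (Finset.abs_sum_le_sum_abs _ _).trans <|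
      (Finset.sum_le_sum fun i _ => hK i).trans_eq (by simp)
  have hK0 : 0 ≤ K := (abs_nonneg _).trans (hK 0)
  rw [hdiff]
  calc |(1 - θ) / 4 * ∑ i, (H (w + unitVec i) - H y) - θ * H y|
      ≤ (1 - θ) / 4 * |∑ i, (H (w + unitVec i) - H y)| + θ * H y := by
        refine (abs_sub _ _).trans ?_
        rw [abs_mul, abs_of_nonneg (by linarith : 0 ≤ (1 - θ) / 4),
          abs_of_nonneg (mul_nonneg hθ0 hy)]
    _ ≤ K + θ * H y := by nlinarith

end Coupling

def diagSum (x : V) : ℤ := x.1 + x.2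

def diagDiff (x : V) : ℤ := x.1 - x.2

lemma diagSum_add (x y : V) : diagSum (x + y) = diagSum x + diagSum y := by
  simp only [diagSum, Prod.fst_add, Prod.snd_add]; ring

lemma diagSum_sub (x y : V) : diagSum (x - y) = diagSum x - diagSum y := by
  simp only [diagSum, Prod.fst_sub, Prod.snd_sub]; ring

lemma diagDiff_add (x y : V) : diagDiff (x + y) = diagDiff x + diagDiff y := by
  simp only [diagDiff, Prod.fst_add, Prod.snd_add]; ring

lemma odd_diagSum_unitVec (i : Fin 4) : Odd (diagSum (unitVec i)) := by
  fin_cases i <;> decide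

lemma abs_diagSum_le_l1Norm (x : V) : |diagSum x| ≤ l1Norm x := abs_add_le _ _

lemma abs_diagDiff_le_l1Norm (x : V) : |diagDiff x| ≤ l1Norm x := abs_sub _ _

lemma l1Norm_sq_le (x : V) : l1Norm x ^ 2 ≤ diagSum x ^ 2 + diagDiff x ^ 2 := by
  simp only [l1Norm, diagSum, diagDiff]
  nlinarith [sq_abs x.1, sq_abs x.2, abs_mul_abs_self x.1, abs_mul_abs_self x.2,
    abs_mul x.1 x.2, abs_mul_self (x.1 * x.2)]

/-- `g t = 4R|t| - t²` satisfies `g (t + 2) + g (t - 2) = 2 g t - 8` for even `t ≠ 0`: this is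
what makes the barrier decrease on average under the mirror coupling. -/
def barrierProfile (R a b : ℤ) : ℤ := a ^ 2 + b ^ 2 + 2 * (4 * R * |a - b| - (a - b) ^ 2)

lemma barrierProfile_mirror (R : ℤ) {a b : ℤ} (hne : a ≠ b) (heven : Even (a - b)) :
    barrierProfile R (a + 1) (b - 1) + barrierProfile R (a - 1) (b + 1) =
      2 * barrierProfile R a b - 12 := by
  have habs : |a - b + 2| + |a - b - 2| = 2 * |a - b| := by
    obtain ⟨k, hk⟩ := heven
    simp only [abs_eq_max_neg]
    omega
  simp only [barrierProfile]
  rw [show a + 1 - (b - 1) = a - b + 2 by ring, show a - 1 - (b + 1) = a - b - 2 by ring]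
  linear_combination 8 * R * habs

lemma barrierProfile_sync (R a b : ℤ) :
    barrierProfile R (a + 1) (b + 1) + barrierProfile R (a - 1) (b - 1) =
      2 * barrierProfile R a b + 4 := by
  simp only [barrierProfile]
  rw [show a + 1 - (b + 1) = a - b by ring, show a - 1 - (b - 1) = a - b by ring]
  ring

lemma sq_add_sq_le_barrierProfile {R a b : ℤ} (ha : |a| ≤ R) (hb : |b| ≤ R) :
    a ^ 2 + b ^ 2 ≤ barrierProfile R a b := by
  have hab : |a - b| ≤ 2 * R := (abs_sub a b).trans (by linarith)
  simp only [barrierProfile]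
  nlinarith [abs_nonneg (a - b), sq_abs (a - b)]

lemma barrierProfile_zero_le {R : ℤ} (b : ℤ) : barrierProfile R 0 b ≤ 8 * R * |b| := by
  simp only [barrierProfile, zero_sub, abs_neg]
  nlinarith [sq_nonneg b]

def barrier (R : ℤ) (x y : V) : ℤ :=
  barrierProfile R (diagSum x) (diagSum y) + barrierProfile R (diagDiff x) (diagDiff y)

lemma l1Norm_sq_add_sq_le_barrier {R : ℤ} {x y : V} (hx : l1Norm x ≤ R) (hy : l1Norm y ≤ R) :
    l1Norm x ^ 2 + l1Norm y ^ 2 ≤ barrier R x y := by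
  have := sq_add_sq_le_barrierProfile ((abs_diagSum_le_l1Norm x).trans hx)
    ((abs_diagSum_le_l1Norm y).trans hy)
  have := sq_add_sq_le_barrierProfile ((abs_diagDiff_le_l1Norm x).trans hx)
    ((abs_diagDiff_le_l1Norm y).trans hy)
  rw [barrier]
  linarith [l1Norm_sq_le x, l1Norm_sq_le y]

lemma barrier_zero_le {R : ℤ} (hR : 0 ≤ R) (y : V) : barrier R 0 y ≤ 16 * R * l1Norm y := by
  have h1 := barrierProfile_zero_le (R := R) (diagSum y)
  have h2 := barrierProfile_zero_le (R := R) (diagDiff y)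
  have := mul_le_mul_of_nonneg_left (abs_diagSum_le_l1Norm y) (by positivity : 0 ≤ 8 * R)
  have := mul_le_mul_of_nonneg_left (abs_diagDiff_le_l1Norm y) (by positivity : 0 ≤ 8 * R)
  simp only [barrier, show diagSum 0 = 0 from rfl, show diagDiff 0 = 0 from rfl]
  linarith

/-- Mirror coupling in one rotated coordinate and synchronous coupling in the other: the
coordinate in which `x` and `y` differ is mirrored, which is where the barrier is concave. -/
lemma exists_perm_sum_barrier_eq {R : ℤ} {x y : V} (hne : x ≠ y)
    (heven : Even (diagSum x - diagSum y)) :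
    ∃ σ : Equiv.Perm (Fin 4),
      ∑ i, barrier R (x + unitVec i) (y + unitVec (σ i)) = 4 * barrier R x y - 16 := by
  by_cases hs : diagSum x = diagSum y
  · have hd : diagDiff x ≠ diagDiff y := by
      refine fun hd => hne (Prod.ext ?_ ?_) <;>
        · simp only [diagSum, diagDiff] at hs hd
          omega
    have hdeven : Even (diagDiff x - diagDiff y) := by
      refine ⟨y.2 - x.2, ?_⟩
      simp only [diagSum, diagDiff] at hs ⊢
      omega
    refine ⟨Equiv.addRight 2, ?_⟩
    simp only [Fin.sum_univ_four, barrier, diagSum_add, diagDiff_add]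
    generalize diagSum x = a, diagSum y = b, diagDiff x = c, diagDiff y = d at *
    simp only [diagSum, unitVec, Int.reduceNeg, Fin.isValue, Matrix.cons_val_zero, add_zero,
      Equiv.coe_addRight, zero_add, Matrix.cons_val, diagDiff, sub_zero, zero_sub, ← sub_eq_add_neg,
      Matrix.cons_val_one, Fin.reduceAdd, sub_neg_eq_add]
    linear_combination 2 * barrierProfile_sync R a b + 2 * barrierProfile_mirror R hd hdeven
  · refine ⟨Fin.revPerm, ?_⟩
    simp only [Fin.sum_univ_four, barrier, diagSum_add, diagDiff_add]
    generalize diagSum x = a, diagSum y = b, diagDiff x = c, diagDiff y = d at *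
    simp only [diagSum, unitVec, Int.reduceNeg, Fin.isValue, Matrix.cons_val_zero, add_zero,
      Fin.revPerm_apply, Fin.rev_zero, Fin.reduceLast, Matrix.cons_val, ← sub_eq_add_neg, zero_sub,
      diagDiff, sub_zero, sub_neg_eq_add, zero_add, Matrix.cons_val_one, Fin.reduceRev]
    linear_combination 2 * barrierProfile_mirror R hs heven + 2 * barrierProfile_sync R c d

theorem Set.Finite.nonpos_of_forall_pos_exists_gt {α β : Type*} [LinearOrder β] [Zero β]
    {s : Set α} (hs : s.Finite) {f : α → β} (h : ∀ z ∈ s, 0 < f z → ∃ z' ∈ s, f z < f z') :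
    ∀ z ∈ s, f z ≤ 0 := by
  by_contra! hpos
  obtain ⟨z, hz, hfz⟩ := hpos
  obtain ⟨m, hm, hmax⟩ := Set.exists_max_image s f hs ⟨z, hz⟩
  obtain ⟨z', hz', hlt⟩ := h m hm (hfz.trans_le (hmax z hz))
  exact (hmax z' hz').not_gt hlt

def couplingDomain (R : ℤ) : Set (V × V) :=
  {z | l1Norm z.1 ≤ R ∧ l1Norm z.2 ≤ R ∧ Even (diagSum z.1 - diagSum z.2)}

lemma couplingDomain_finite (R : ℤ) : (couplingDomain R).Finite := by
  have hball : {x : V | l1Norm x ≤ R}.Finite := by simpa using finite_setOf_l1Norm_sub_le 0 R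
  exact (hball.prod hball).subset fun z hz => ⟨hz.1, hz.2.1⟩

lemma add_unitVec_mem_couplingDomain {R : ℤ} {x y : V} (hx : l1Norm x ≤ R - 1)
    (hy : l1Norm y ≤ R - 1) (heven : Even (diagSum x - diagSum y)) (i j : Fin 4) :
    (x + unitVec i, y + unitVec j) ∈ couplingDomain R := by
  refine ⟨?_, ?_, ?_⟩
  · linarith [l1Norm_add_le x (unitVec i), l1Norm_unitVec i]
  · linarith [l1Norm_add_le y (unitVec j), l1Norm_unitVec j]
  · rw [diagSum_add, diagSum_add, add_sub_add_comm]
    exact heven.add ((odd_diagSum_unitVec i).sub_odd (odd_diagSum_unitVec j))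

section Barrier

variable {θ M : ℝ} {R : ℤ} {H : V → ℝ}

lemma exists_coupled_step_gt {c : ℝ} {x y : V} (hθ0 : 0 ≤ θ) (hθ1 : θ ≤ 1) (hc : 0 < c)
    (hne : x ≠ y) (heven : Even (diagSum x - diagSum y))
    (hx : MassiveHarmonicAt θ H x) (hy : MassiveHarmonicAt θ H y) :
    ∃ i j, |H x - H y| - c * barrier R x y <
      |H (x + unitVec i) - H (y + unitVec j)| - c * barrier R (x + unitVec i) (y + unitVec j) := by
  obtain ⟨σ, hσ⟩ := exists_perm_sum_barrier_eq (R := R) hne heven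
  have hσ' : ∑ i, (barrier R (x + unitVec i) (y + unitVec (σ i)) : ℝ) =
      4 * barrier R x y - 16 := by
    exact_mod_cast hσ
  have hcoup := abs_sub_le_of_coupling hθ0 hθ1 hx hy σ
  have hsum : ∑ _i : Fin 4, (|H x - H y| - c * barrier R x y) <
      ∑ i, (|H (x + unitVec i) - H (y + unitVec (σ i))| -
        c * barrier R (x + unitVec i) (y + unitVec (σ i))) := by
    simp only [Finset.sum_sub_distrib, ← Finset.mul_sum, hσ', Finset.sum_const,
      Finset.card_univ, Fintype.card_fin, nsmul_eq_mul]
    push_cast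
    linarith
  obtain ⟨i, -, hi⟩ := Finset.exists_lt_of_sum_lt hsum
  exact ⟨i, σ i, hi⟩

theorem abs_sub_le_mul_barrier (hθ0 : 0 ≤ θ) (hθ1 : θ ≤ 1) (hM : 0 < M) (hR : 0 < R)
    (hH : ∀ x, l1Norm x ≤ R → 0 ≤ H x ∧ H x ≤ M)
    (hharm : ∀ x, l1Norm x ≤ R - 1 → MassiveHarmonicAt θ H x) :
    ∀ z ∈ couplingDomain R, |H z.1 - H z.2| ≤ M / R ^ 2 * barrier R z.1 z.2 := by
  set c : ℝ := M / R ^ 2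
  have hc : 0 < c := by positivity
  have hcR : c * R ^ 2 = M := div_mul_cancel₀ M (by positivity)
  let F : V × V → ℝ := fun z => |H z.1 - H z.2| - c * barrier R z.1 z.2
  suffices ∀ z ∈ couplingDomain R, F z ≤ 0 from fun z hz => by linarith [this z hz]
  refine (couplingDomain_finite R).nonpos_of_forall_pos_exists_gt ?_
  rintro ⟨x, y⟩ ⟨hx, hy, heven⟩ hpos
  have hB := l1Norm_sq_add_sq_le_barrier hx hy
  by_cases hint : l1Norm x ≤ R - 1 ∧ l1Norm y ≤ R - 1
  · have hxy : x ≠ y := by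
      rintro rfl
      have : (0 : ℝ) ≤ barrier R x x := by exact_mod_cast (by positivity : (0 : ℤ) ≤ _).trans hB
      simp only [F, sub_self, abs_zero, zero_sub, neg_pos] at hpos
      nlinarith
    obtain ⟨i, j, hij⟩ :=
      exists_coupled_step_gt hθ0 hθ1 hc hxy heven (hharm x hint.1) (hharm y hint.2)
    exact ⟨_, add_unitVec_mem_couplingDomain hint.1 hint.2 heven i j, hij⟩
  · exfalso
    have hedge : R ^ 2 ≤ barrier R x y := by
      have : R ≤ l1Norm x ∨ R ≤ l1Norm y := by omega
      rcases this with h | h <;> nlinarith [sq_nonneg (l1Norm x), sq_nonneg (l1Norm y)]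
    have hedge' : (R : ℝ) ^ 2 ≤ barrier R x y := by exact_mod_cast hedge
    have hdiff : |H x - H y| ≤ M := by
      rw [abs_le]
      constructor <;> linarith [hH x hx, hH y hy]
    simp only [F] at hpos
    nlinarith

theorem abs_sub_le_of_even {w y : V} (hθ0 : 0 ≤ θ) (hθ1 : θ ≤ 1) (hR : 0 < R)
    (hH : ∀ x, l1Norm (x - w) ≤ R → 0 ≤ H x ∧ H x ≤ M)
    (hharm : ∀ x, l1Norm (x - w) ≤ R - 1 → MassiveHarmonicAt θ H x)
    (hy : l1Norm (y - w) ≤ R) (heven : Even (diagSum (y - w))) :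
    |H w - H y| ≤ 16 * M * l1Norm (y - w) / R := by
  have hw : l1Norm (w - w) ≤ R := by simpa [l1Norm] using hR.le
  have hL : (0 : ℝ) ≤ l1Norm (y - w) := by unfold l1Norm; positivity
  rcases (hH w hw).1.trans (hH w hw).2 |>.eq_or_lt with rfl | hM
  · rw [mul_zero, zero_mul, zero_div, abs_nonpos_iff, sub_eq_zero]
    linarith [hH w hw, hH y hy]
  have hbar := abs_sub_le_mul_barrier (H := fun x => H (w + x)) hθ0 hθ1 hM hR
    (fun x hx => hH (w + x) (by rwa [add_sub_cancel_left]))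
    (fun x hx => massiveHarmonicAt_comp_add_left.mpr (hharm (w + x) (by rwa [add_sub_cancel_left])))
    (0, y - w) ⟨by simpa [l1Norm] using hR.le, hy,
      by rwa [show diagSum 0 = 0 from rfl, zero_sub, even_neg]⟩
  simp only [add_zero, add_sub_cancel] at hbar
  have hR' : (0 : ℝ) < R := by exact_mod_cast hR
  have hzero : (barrier R 0 (y - w) : ℝ) ≤ 16 * R * l1Norm (y - w) := by
    exact_mod_cast barrier_zero_le hR.le (y - w)
  calc |H w - H y| ≤ M / R ^ 2 * barrier R 0 (y - w) := hbar
    _ ≤ M / R ^ 2 * (16 * R * l1Norm (y - w)) := by gcongr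
    _ = 16 * M * l1Norm (y - w) / R := by field_simp

end Barrier

section Euclidean

variable {θ M : ℝ} {n : ℕ} {v₀ : V} {H : V → ℝ}

theorem abs_sub_le_of_even_of_eucDist_le (hθ0 : 0 ≤ θ) (hθ1 : θ ≤ 1) (hn : 2 ≤ n)
    (hH : ∀ v, eucDist v v₀ ≤ 2 * n → 0 ≤ H v ∧ H v ≤ M)
    (hharm : ∀ v, eucDist v v₀ ≤ 2 * n - 1 → MassiveHarmonicAt θ H v)
    {w y : V} (hw : eucDist w v₀ ≤ n + 1) (hy : l1Norm (y - w) ≤ n - 1)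
    (heven : Even (diagSum (y - w))) :
    |H w - H y| ≤ 32 * M * l1Norm (y - w) / n := by
  have hn2 : (2 : ℝ) ≤ n := by exact_mod_cast hn
  have hball : ∀ x, eucDist x v₀ ≤ l1Norm (x - w) + (n + 1) := fun x =>
    (eucDist_triangle x w v₀).trans (by linarith [eucDist_le_l1Norm x w])
  refine (abs_sub_le_of_even hθ0 hθ1 (by omega) (fun x hx => hH x ?_)
    (fun x hx => hharm x ?_) hy heven).trans ?_
  · have : (l1Norm (x - w) : ℝ) ≤ n - 1 := by exact_mod_cast hx
    linarith [hball x]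
  · have : (l1Norm (x - w) : ℝ) ≤ n - 1 - 1 := by exact_mod_cast hx
    linarith [hball x]
  · have hM : 0 ≤ M := (hH w (by linarith)).1.trans (hH w (by linarith)).2
    have hL : (0 : ℝ) ≤ l1Norm (y - w) := by unfold l1Norm; positivity
    push_cast
    rw [div_le_div_iff₀ (by linarith) (by linarith)]
    nlinarith [mul_nonneg hM hL]

theorem abs_sub_le_of_odd_of_eucDist_le (hθ0 : 0 ≤ θ) (hθ1 : θ ≤ 1) (hn : 1 ≤ n)
    (hθn : θ * (n : ℝ) ^ 2 ≤ 1)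
    (hH : ∀ v, eucDist v v₀ ≤ 2 * n → 0 ≤ H v ∧ H v ≤ M)
    (hharm : ∀ v, eucDist v v₀ ≤ 2 * n - 1 → MassiveHarmonicAt θ H v)
    {v₁ v₂ : V} (hv₁ : eucDist v₁ v₀ ≤ n) (hv₂ : eucDist v₂ v₀ ≤ n)
    (hL : 1 ≤ l1Norm (v₁ - v₂)) (hLn : l1Norm (v₁ - v₂) + 2 ≤ n)
    (hodd : Odd (diagSum (v₁ - v₂))) :
    |H v₂ - H v₁| ≤ 65 * M * l1Norm (v₁ - v₂) / n := by
  set L := l1Norm (v₁ - v₂)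
  have hn1 : (1 : ℝ) ≤ n := by exact_mod_cast hn
  have hL' : (1 : ℝ) ≤ L := by exact_mod_cast hL
  have hH₁ := hH v₁ (by linarith)
  have hM : 0 ≤ M := hH₁.1.trans hH₁.2
  have hstep : ∀ i, |H (v₂ + unitVec i) - H v₁| ≤ 64 * M * L / n := by
    intro i
    have hdist : l1Norm (v₁ - (v₂ + unitVec i)) ≤ L + 1 := by
      rw [sub_add_eq_sub_sub]
      linarith [l1Norm_sub_le (v₁ - v₂) (unitVec i), l1Norm_unitVec i]
    have hdist' : (l1Norm (v₁ - (v₂ + unitVec i)) : ℝ) ≤ 2 * L := by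
      exact_mod_cast (by omega : l1Norm (v₁ - (v₂ + unitVec i)) ≤ 2 * L)
    have hw : eucDist (v₂ + unitVec i) v₀ ≤ n + 1 := by
      have := eucDist_le_l1Norm (v₂ + unitVec i) v₂
      rw [add_sub_cancel_left, l1Norm_unitVec, Int.cast_one] at this
      linarith [eucDist_triangle (v₂ + unitVec i) v₂ v₀]
    have heven : Even (diagSum (v₁ - (v₂ + unitVec i))) := by
      rw [sub_add_eq_sub_sub, diagSum_sub]
      exact hodd.sub_odd (odd_diagSum_unitVec i)
    refine (abs_sub_le_of_even_of_eucDist_le hθ0 hθ1 (by omega) hH hharm hw (by omega)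
      heven).trans ?_
    rw [div_le_div_iff_of_pos_right (by linarith)]
    nlinarith
  have hkill : θ * H v₁ ≤ M * L / n := by
    rw [le_div_iff₀ (by linarith)]
    calc θ * H v₁ * n ≤ θ * M * n := by gcongr; exact hH₁.2
      _ ≤ θ * M * n ^ 2 := mul_le_mul_of_nonneg_left (by nlinarith) (mul_nonneg hθ0 hM)
      _ ≤ M := by nlinarith
      _ ≤ M * L := le_mul_of_one_le_right hM hL'
  calc |H v₂ - H v₁| ≤ 64 * M * L / n + θ * H v₁ :=
        abs_sub_le_of_forall_neighbor hθ0 hθ1 (hharm v₂ (by linarith)) hH₁.1 hstep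
    _ ≤ 65 * M * L / n := by linarith [show 65 * M * L / n = 64 * M * L / n + M * L / n by ring]

theorem abs_sub_le_mul_l1Norm_div (hθ0 : 0 ≤ θ) (hθ1 : θ ≤ 1) (hn : 1 ≤ n)
    (hθn : θ * (n : ℝ) ^ 2 ≤ 1)
    (hH : ∀ v, eucDist v v₀ ≤ 2 * n → 0 ≤ H v ∧ H v ≤ M)
    (hharm : ∀ v, eucDist v v₀ ≤ 2 * n - 1 → MassiveHarmonicAt θ H v)
    {v₁ v₂ : V} (hv₁ : eucDist v₁ v₀ ≤ n) (hv₂ : eucDist v₂ v₀ ≤ n) :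
    |H v₂ - H v₁| ≤ 65 * M * l1Norm (v₁ - v₂) / n := by
  set L := l1Norm (v₁ - v₂)
  have hn0 : (0 : ℝ) < n := by exact_mod_cast hn
  have hH₁ := hH v₁ (by linarith)
  have hH₂ := hH v₂ (by linarith)
  have hM : 0 ≤ M := hH₁.1.trans hH₁.2
  rcases eq_or_ne v₁ v₂ with rfl | hne
  · simp only [sub_self, abs_zero]
    unfold L l1Norm
    positivity
  have hL : 1 ≤ L := one_le_l1Norm (sub_ne_zero.mpr hne)
  by_cases hfar : (n : ℤ) < L + 2
  · have : (n : ℝ) ≤ 2 * L := by exact_mod_cast (by omega : (n : ℤ) ≤ 2 * L)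
    calc |H v₂ - H v₁| ≤ M := by rw [abs_le]; constructor <;> linarith
      _ ≤ 65 * M * L / n := by rw [le_div_iff₀ hn0]; nlinarith
  rcases Int.even_or_odd (diagSum (v₁ - v₂)) with heven | hodd
  · calc |H v₂ - H v₁| ≤ 32 * M * L / n :=
          abs_sub_le_of_even_of_eucDist_le hθ0 hθ1 (by omega) hH hharm (by linarith) (by omega)
            heven
      _ ≤ 65 * M * L / n := by gcongr; norm_num
  · exact abs_sub_le_of_odd_of_eucDist_le hθ0 hθ1 hn hθn hH hharm hv₁ hv₂ hL (by omega) hodd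

end Euclidean
theorem statement10 :
    ∃ C : ℝ, 0 < C ∧ ∃ β : ℝ, 0 < β ∧
      ∀ (θ : ℝ), 0 ≤ θ → θ < 1 → ∀ (n : ℕ), 1 ≤ n → θ * (n : ℝ) ^ 2 ≤ 1 →
      ∀ (v₀ : V) (H : V → ℝ),
        (∀ v : V, eucDist v v₀ ≤ 2 * n → 0 ≤ H v) →
        (∀ v : V, eucDist v v₀ ≤ 2 * n - 1 → MassiveHarmonicAt θ H v) →
        ∀ v₁ v₂ : V, eucDist v₁ v₀ ≤ n → eucDist v₂ v₀ ≤ n →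
          |H v₂ - H v₁| ≤ C * (eucDist v₂ v₁ / n) ^ β *
            sSup (H '' {v : V | eucDist v v₀ ≤ 2 * n}) := by
  refine ⟨130, by norm_num, 1, one_pos, ?_⟩
  intro θ hθ0 hθ1 n hn hθn v₀ H hpos hharm v₁ v₂ hv₁ hv₂
  set M := sSup (H '' {v : V | eucDist v v₀ ≤ 2 * n})
  have hfin : {v : V | eucDist v v₀ ≤ 2 * n}.Finite :=
    (finite_setOf_l1Norm_sub_le v₀ (4 * n)).subset fun v (hv : eucDist v v₀ ≤ 2 * n) => by
      have : (l1Norm (v - v₀) : ℝ) ≤ 4 * n := by linarith [l1Norm_le_two_mul_eucDist v v₀]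
      exact_mod_cast this
  have hH : ∀ v, eucDist v v₀ ≤ 2 * n → 0 ≤ H v ∧ H v ≤ M := fun v hv =>
    ⟨hpos v hv, le_csSup (hfin.image H).bddAbove ⟨v, hv, rfl⟩⟩
  have hM : 0 ≤ M := (hH v₁ (by linarith)).1.trans (hH v₁ (by linarith)).2
  have hL : (l1Norm (v₁ - v₂) : ℝ) ≤ 2 * eucDist v₂ v₁ :=
    eucDist_comm v₁ v₂ ▸ l1Norm_le_two_mul_eucDist v₁ v₂
  calc |H v₂ - H v₁| ≤ 65 * M * l1Norm (v₁ - v₂) / n :=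
        abs_sub_le_mul_l1Norm_div hθ0 hθ1.le hn hθn hH hharm hv₁ hv₂
    _ ≤ 65 * M * (2 * eucDist v₂ v₁) / n := by gcongr
    _ = 130 * (eucDist v₂ v₁ / n) ^ (1 : ℝ) * M := by rw [Real.rpow_one]; ring
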